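/- arXiv:0910.5855 — 3 statements merged into one kernel-verified Lean document; each statement's English description precedes it below -/
import Mathlib

section
/- For every ν ∈ (0,1], every x > 0 and every u with 0 < u ≤ 1, the infinite sum of generalized Mittag-Leffler functions satisfies Σ_{k=0}^∞ (u x)^{k} E_{ν, νk+1}^{k+1}(-x) = E_{ν,1}(x(u - 1)). In particular, for u = 1 one has Σ_{k=0}^∞ x^{k} E_{ν, νk+1}^{k+1}(-x) = 1. -/
/-!
Since `(k + 1)_r = r! * C(k + r, k)`, the `k`-th summand expands as
`Σ_r C(k + r, k) (ux)^k (-x)^r / Γ(ν(k + r) + 1)`. The resulting double series converges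
absolutely: log-convexity of `Γ` gives `Γ(t + ν) ≥ (t - 1)^ν Γ(t)`, so `Σ c^n / Γ(νn + 1)`
converges for every `c` by the ratio test. Summing it along the antidiagonals `k + r = n`, the
binomial theorem collapses the inner sums to `(ux - x)^n / Γ(νn + 1)`, which is the series of
`E_{ν,1}(x(u - 1))`; at `u = 1` only the term `1 / Γ(1) = 1` survives.
-/

open Real

/-- The generalized Mittag-Leffler function
`E_{α,β}^γ(x) = Σ_{r=0}^∞ (γ)_r x^r / (r! Γ(αr+β))`. -/
noncomputable def gml (α β γ x : ℝ) : ℝ :=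
  ∑' r : ℕ, (∏ i ∈ Finset.range r, (γ + i)) * x ^ r /
    (r.factorial * Real.Gamma (α * r + β))

/-- The two-parameter Mittag-Leffler function `E_{α,β}(x) = Σ_{r=0}^∞ x^r / Γ(αr+β)`. -/
noncomputable def ml (α β x : ℝ) : ℝ :=
  ∑' r : ℕ, x ^ r / Real.Gamma (α * r + β)

open Filter Finset

theorem Real.Gamma_mul_sub_one_rpow_le_Gamma_add {t ν : ℝ} (ht : 1 < t) (hν : 0 < ν) :
    Gamma t * (t - 1) ^ ν ≤ Gamma (t + ν) := by
  have ht₁ : 0 < t - 1 := sub_pos.mpr ht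
  have hΓ : ∀ s, 0 < s → 0 < Gamma s := fun s hs => Gamma_pos_of_pos hs
  -- log-convexity: the slope of `log ∘ Gamma` on `[t, t + ν]` is at least its slope
  -- `log (t - 1)` on `[t - 1, t]`
  have hslope := convexOn_log_Gamma.slope_mono_adjacent (x := t - 1) (y := t) (z := t + ν)
    ht₁ (show 0 < t + ν by linarith) (by linarith) (by linarith)
  have hstep : Gamma t = (t - 1) * Gamma (t - 1) := by
    simpa using Gamma_add_one ht₁.ne'
  simp only [Function.comp, hstep, sub_sub_cancel, div_one, add_sub_cancel_left] at hslope
  rw [log_mul ht₁.ne' (hΓ _ ht₁).ne', add_sub_cancel_right, le_div_iff₀ hν] at hslope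
  rw [← log_le_log_iff (by positivity) (hΓ _ (by linarith)),
    log_mul (by positivity) (by positivity), log_rpow ht₁, hstep,
    log_mul ht₁.ne' (hΓ _ ht₁).ne']
  linarith

theorem summable_pow_div_Gamma_mul_add_one {ν : ℝ} (hν : 0 < ν) (c : ℝ) :
    Summable fun n : ℕ => c ^ n / Gamma (ν * n + 1) := by
  refine summable_of_ratio_norm_eventually_le one_half_lt_one ?_
  have hgrowth : Tendsto (fun n : ℕ => (ν * n) ^ ν) atTop atTop :=
    (tendsto_rpow_atTop hν).comp (tendsto_natCast_atTop_atTop.const_mul_atTop hν)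
  filter_upwards [hgrowth.eventually_ge_atTop (2 * |c|), eventually_gt_atTop 0]
    with n hn hn₀
  have hνn : 0 < ν * n := by positivity
  have hΓ : 0 < Gamma (ν * n + 1) := Gamma_pos_of_pos (by linarith)
  have hratio := Real.Gamma_mul_sub_one_rpow_le_Gamma_add (t := ν * n + 1) (by linarith) hν
  rw [add_sub_cancel_right] at hratio
  have hΓ' : 0 < Gamma (ν * n + 1 + ν) := lt_of_lt_of_le (by positivity) hratio
  rw [show ν * ((n + 1 : ℕ) : ℝ) + 1 = ν * n + 1 + ν by push_cast; ring]
  simp only [norm_div, norm_pow, Real.norm_eq_abs, abs_of_pos hΓ, abs_of_pos hΓ']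
  rw [div_le_iff₀ hΓ']
  calc |c| ^ (n + 1)
        = 1 / 2 * (|c| ^ n / Gamma (ν * n + 1)) * (Gamma (ν * n + 1) * (2 * |c|)) := by
        field_simp; ring
    _ ≤ 1 / 2 * (|c| ^ n / Gamma (ν * n + 1)) * Gamma (ν * n + 1 + ν) := by
        gcongr
        exact (mul_le_mul_of_nonneg_left hn hΓ.le).trans hratio

theorem sum_antidiagonal_choose_mul_pow_mul_pow {R : Type*} [CommSemiring R] (c : ℕ → R)
    (a b : R) (n : ℕ) :
    ∑ p ∈ antidiagonal n, c (p.1 + p.2) * (p.1 + p.2).choose p.1 * a ^ p.1 * b ^ p.2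
      = c n * (a + b) ^ n := by
  rw [(Commute.all a b).add_pow', mul_sum]
  refine sum_congr rfl fun p hp => ?_
  rw [mem_antidiagonal.mp hp, nsmul_eq_mul]
  ring

theorem HasSum.sum_antidiagonal {α : Type*} [AddCommGroup α] [TopologicalSpace α]
    [IsTopologicalAddGroup α] [T3Space α] {f : ℕ × ℕ → α} {s : α} (h : HasSum f s) :
    HasSum (fun n => ∑ p ∈ antidiagonal n, f p) s := by
  simpa only [Function.comp_apply, HasAntidiagonal.sigmaAntidiagonalEquivProd_apply,
    Finset.sum_coe_sort] using
    (HasAntidiagonal.sigmaAntidiagonalEquivProd.hasSum_iff.mpr h).sigma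
      fun _ => hasSum_fintype _

theorem summable_prod_iff_summable_sum_antidiagonal_of_nonneg {f : ℕ × ℕ → ℝ}
    (hf : 0 ≤ f) :
    Summable f ↔ Summable fun n => ∑ p ∈ antidiagonal n, f p := by
  rw [← HasAntidiagonal.sigmaAntidiagonalEquivProd.summable_iff]
  refine (summable_sigma_of_nonneg fun _ => hf _).trans ?_
  simpa only [Function.comp_apply, HasAntidiagonal.sigmaAntidiagonalEquivProd_apply,
    tsum_fintype, Finset.sum_coe_sort] using
    and_iff_right fun n => (hasSum_fintype _).summable

theorem hasSum_choose_mul_pow_mul_pow {c : ℕ → ℝ} {a b : ℝ}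
    (h : Summable fun n => |c n| * (|a| + |b|) ^ n) :
    HasSum (fun p : ℕ × ℕ => c (p.1 + p.2) * (p.1 + p.2).choose p.1 * a ^ p.1 * b ^ p.2)
      (∑' n, c n * (a + b) ^ n) := by
  have habs : Summable fun p : ℕ × ℕ =>
      |c (p.1 + p.2)| * (p.1 + p.2).choose p.1 * |a| ^ p.1 * |b| ^ p.2 :=
    (summable_prod_iff_summable_sum_antidiagonal_of_nonneg fun _ => by positivity).mpr <|
      h.congr fun n => (sum_antidiagonal_choose_mul_pow_mul_pow (|c ·|) |a| |b| n).symm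
  have hF : Summable fun p : ℕ × ℕ =>
      c (p.1 + p.2) * (p.1 + p.2).choose p.1 * a ^ p.1 * b ^ p.2 :=
    summable_abs_iff.mp <| habs.congr fun p => by simp [abs_mul]
  have := hF.hasSum.sum_antidiagonal
  simp only [sum_antidiagonal_choose_mul_pow_mul_pow] at this
  rw [this.tsum_eq]
  exact hF.hasSum

theorem prod_range_natCast_add_one_add (k r : ℕ) :
    ∏ i ∈ range r, ((k : ℝ) + 1 + i) = r.factorial * (k + r).choose k := by
  have h := Nat.ascFactorial_eq_prod_range (k + 1) r
  rw [Nat.ascFactorial_eq_factorial_mul_choose, ← Nat.choose_symm_add] at h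
  exact_mod_cast h.symm

theorem pow_mul_gml_eq_tsum (ν a b : ℝ) (k : ℕ) :
    a ^ k * gml ν (ν * k + 1) (k + 1) b =
      ∑' r : ℕ, (Gamma (ν * (k + r : ℕ) + 1))⁻¹ * (k + r).choose k * a ^ k * b ^ r := by
  rw [gml, ← tsum_mul_left]
  refine tsum_congr fun r => ?_
  rw [prod_range_natCast_add_one_add]
  have hr : (r.factorial : ℝ) ≠ 0 := by positivity
  push_cast
  field_simp
  ring_nf

theorem tsum_pow_mul_gml {ν : ℝ} (hν : 0 < ν) (a b : ℝ) :
    ∑' k : ℕ, a ^ k * gml ν (ν * k + 1) (k + 1) b = ml ν 1 (a + b) := by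
  have hsum : Summable fun n : ℕ => |(Gamma (ν * n + 1))⁻¹| * (|a| + |b|) ^ n := by
    refine (summable_pow_div_Gamma_mul_add_one hν (|a| + |b|)).congr fun n => ?_
    rw [abs_inv, abs_of_pos (Gamma_pos_of_pos (by positivity)), inv_mul_eq_div]
  have hF := hasSum_choose_mul_pow_mul_pow hsum
  calc ∑' k : ℕ, a ^ k * gml ν (ν * k + 1) (k + 1) b
      = ∑' (k : ℕ) (r : ℕ),
          (Gamma (ν * (k + r : ℕ) + 1))⁻¹ * (k + r).choose k * a ^ k * b ^ r :=
        tsum_congr (pow_mul_gml_eq_tsum ν a b)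
    _ = ∑' n : ℕ, (Gamma (ν * n + 1))⁻¹ * (a + b) ^ n :=
        hF.summable.tsum_prod.symm.trans hF.tsum_eq
    _ = ml ν 1 (a + b) := tsum_congr fun n => inv_mul_eq_div _ _

theorem ml_zero (α β : ℝ) : ml α β 0 = (Gamma β)⁻¹ := by
  rw [ml, tsum_eq_single 0 fun r hr => by rw [zero_pow hr, zero_div]]
  simp

theorem gml_generating_function_general (ν x u : ℝ) (hν : 0 < ν) :
    (∑' k : ℕ, (u * x) ^ k * gml ν (ν * k + 1) (k + 1) (-x)) = ml ν 1 (x * (u - 1))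
      ∧ (∑' k : ℕ, x ^ k * gml ν (ν * k + 1) (k + 1) (-x)) = 1 := by
  constructor
  · rw [tsum_pow_mul_gml hν, show u * x + -x = x * (u - 1) by ring]
  · rw [tsum_pow_mul_gml hν, add_neg_cancel, ml_zero, Gamma_one, inv_one]

/-- For `ν ∈ (0,1]`, `x > 0`, `0 < u ≤ 1`:
`Σ_{k=0}^∞ (ux)^k E_{ν,νk+1}^{k+1}(-x) = E_{ν,1}(x(u-1))`, and in particular for `u = 1`
`Σ_{k=0}^∞ x^k E_{ν,νk+1}^{k+1}(-x) = 1`. -/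
theorem gml_generating_function (ν x u : ℝ) (hν : 0 < ν) (hν1 : ν ≤ 1)
    (hx : 0 < x) (hu : 0 < u) (hu1 : u ≤ 1) :
    (∑' k : ℕ, (u * x) ^ k * gml ν (ν * k + 1) (k + 1) (-x)) = ml ν 1 (x * (u - 1))
      ∧ (∑' k : ℕ, x ^ k * gml ν (ν * k + 1) (k + 1) (-x)) = 1 :=
  gml_generating_function_general ν x u hν
end

section
/- For every ν ∈ (0,1], λ > 0 and t > 0, the convolution of the Mittag-Leffler interarrival density with itself satisfies ∫₀^{t} λ s^{ν-1} E_{ν,ν}(-λ s^{ν}) · λ (t-s)^{ν-1} E_{ν,ν}(-λ (t-s)^{ν}) ds = λ² t^{2ν-1} E_{ν, 2ν}^{2}(-λ t^{ν}). -/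
open Real MeasureTheory

/-!
Both factors are power series,
`s ^ (a - 1) E_{ν,a}(x s ^ ν) = ∑ₘ x ^ m s ^ (νm + a - 1) / Γ(νm + a)` with `a = b = ν`, `x = -λ`.
By Euler's Beta integral the `(m, n)` term of their product integrates to
`x ^ (m + n) t ^ (ν(m + n) + a + b - 1) / Γ(ν(m + n) + a + b)`, which depends only on `m + n`,
and the `r + 1 = (2)_r / r!` pairs with `m + n = r` assemble `t ^ (a + b - 1) E²_{ν,a+b}(x t ^ ν)`.
Termwise integration is justified by absolute convergence: for `ν ≤ 1`, log-convexity of `Γ`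
gives `Γ(y + ν) ≥ (y + ν - 1) ^ ν Γ(y)`, so the coefficients decay faster than any geometric
sequence.
-/

open Filter

namespace Real

/-- Wendel's inequality. -/
theorem Gamma_add_le_rpow_mul_Gamma {x s : ℝ} (hx : 0 < x) (hs0 : 0 ≤ s) (hs1 : s ≤ 1) :
    Gamma (x + s) ≤ x ^ s * Gamma x := by
  rcases hs0.eq_or_lt with rfl | hs0
  · simp
  rcases hs1.eq_or_lt with rfl | hs1
  · rw [Gamma_add_one hx.ne', rpow_one]
  have hconv := Gamma_mul_add_mul_le_rpow_Gamma_mul_rpow_Gamma (a := 1 - s) (b := s) hx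
    (by linarith : 0 < x + 1) (by linarith) hs0 (by ring)
  rw [show (1 - s) * x + s * (x + 1) = x + s by ring, Gamma_add_one hx.ne',
    mul_rpow hx.le (Gamma_pos_of_pos hx).le, ← mul_assoc, mul_comm _ (x ^ s), mul_assoc,
    ← rpow_add (Gamma_pos_of_pos hx), sub_add_cancel, rpow_one] at hconv
  exact hconv

theorem rpow_mul_Gamma_add_one_sub_le {x s : ℝ} (hx : 0 < x) (hs0 : 0 ≤ s) (hs1 : s ≤ 1) :
    x ^ s * Gamma (x + 1 - s) ≤ Gamma (x + 1) := by
  have h := Gamma_add_le_rpow_mul_Gamma hx (sub_nonneg.2 hs1) (by linarith : 1 - s ≤ 1)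
  calc x ^ s * Gamma (x + 1 - s) ≤ x ^ s * (x ^ (1 - s) * Gamma x) := by
        rw [add_sub_assoc]; gcongr
    _ = Gamma (x + 1) := by
        rw [← mul_assoc, ← rpow_add hx, add_sub_cancel, rpow_one, Gamma_add_one hx.ne']

end Real

theorem summable_pow_div_Gamma {ν c y : ℝ} (hν0 : 0 < ν) (hν1 : ν ≤ 1) (hc : 0 < c)
    (hy : 0 ≤ y) : Summable fun n : ℕ => y ^ n / Gamma (ν * n + c) := by
  have hX : Tendsto (fun n : ℕ => ν * n + c + ν - 1) atTop atTop :=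
    (tendsto_atTop_add_const_right _ (c + ν - 1)
      (tendsto_natCast_atTop_atTop.const_mul_atTop hν0)).congr fun n => by ring
  refine summable_of_ratio_norm_eventually_le (r := 1 / 2) (by norm_num) ?_
  filter_upwards [hX.eventually_gt_atTop 0,
    ((tendsto_rpow_atTop hν0).comp hX).eventually_ge_atTop (2 * y)] with n hXpos hXlarge
  have hΓ : 0 < Gamma (ν * n + c) := by positivity
  have hgrowth : (ν * n + c + ν - 1) ^ ν * Gamma (ν * n + c) ≤ Gamma (ν * ↑(n + 1) + c) := by
    have h := rpow_mul_Gamma_add_one_sub_le hXpos hν0.le hν1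
    rwa [show ν * n + c + ν - 1 + 1 - ν = ν * n + c by ring,
      show ν * n + c + ν - 1 + 1 = ν * ↑(n + 1) + c by push_cast; ring] at h
  rw [norm_of_nonneg (by positivity), norm_of_nonneg (by positivity), pow_succ,
    div_le_iff₀ (by positivity)]
  calc y ^ n * y = 1 / 2 * (y ^ n / Gamma (ν * n + c)) * (2 * y * Gamma (ν * n + c)) := by
        field_simp
    _ ≤ 1 / 2 * (y ^ n / Gamma (ν * n + c)) * Gamma (ν * ↑(n + 1) + c) := by
        gcongr
        exact (mul_le_mul_of_nonneg_right hXlarge hΓ.le).trans hgrowth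

theorem summable_succ_mul_pow_div_Gamma {ν c y : ℝ} (hν0 : 0 < ν) (hν1 : ν ≤ 1) (hc : 0 < c)
    (hy : 0 ≤ y) : Summable fun n : ℕ => (n + 1) * y ^ n / Gamma (ν * n + c) := by
  refine (summable_pow_div_Gamma hν0 hν1 hc (by positivity : 0 ≤ 2 * y)).of_nonneg_of_le
    (fun n => by positivity) fun n => ?_
  rw [mul_pow]
  gcongr
  exact_mod_cast Nat.lt_two_pow_self

theorem integral_rpow_mul_sub_rpow {a b t : ℝ} (ha : 0 < a) (hb : 0 < b) (ht : 0 < t) :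
    ∫ s in (0 : ℝ)..t, s ^ (a - 1) * (t - s) ^ (b - 1) =
      Gamma a * Gamma b / Gamma (a + b) * t ^ (a + b - 1) := by
  apply Complex.ofReal_injective
  have hbeta := Complex.betaIntegral_scaled a b ht
  rw [Complex.betaIntegral_eq_Gamma_mul_div _ _ (by simpa using ha) (by simpa using hb)] at hbeta
  rw [← intervalIntegral.integral_ofReal]
  convert hbeta using 1
  · refine intervalIntegral.integral_congr fun s hs => ?_
    rw [Set.uIcc_of_le ht.le] at hs
    rw [Complex.ofReal_mul, Complex.ofReal_cpow hs.1, Complex.ofReal_cpow (sub_nonneg.2 hs.2)]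
    push_cast
    ring
  · rw [Complex.ofReal_mul, Complex.ofReal_cpow ht.le]
    push_cast
    rw [← Complex.ofReal_add, Complex.Gamma_ofReal, Complex.Gamma_ofReal, Complex.Gamma_ofReal]
    push_cast
    ring

-- The Beta integral is nonzero, and the integral of a non-integrable function is `0`.
theorem intervalIntegrable_rpow_mul_sub_rpow {a b t : ℝ} (ha : 0 < a) (hb : 0 < b) (ht : 0 < t) :
    IntervalIntegrable (fun s => s ^ (a - 1) * (t - s) ^ (b - 1)) volume 0 t :=
  intervalIntegral.intervalIntegrable_of_integral_ne_zero <| by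
    rw [integral_rpow_mul_sub_rpow ha hb ht]; positivity

open Finset in
theorem tsum_antidiagonal_comp_add (f : ℕ → ℝ) (n : ℕ) :
    ∑' p : antidiagonal n, f (p.1.1 + p.1.2) = (n + 1) * f n := by
  rw [tsum_fintype, Finset.sum_coe_sort (antidiagonal n) (fun p => f (p.1 + p.2)),
    Finset.sum_congr rfl fun p hp => by rw [mem_antidiagonal.1 hp], sum_const,
    Nat.card_antidiagonal, nsmul_eq_mul]
  push_cast
  ring

open Finset in
theorem summable_prod_comp_add {f : ℕ → ℝ} (hf : 0 ≤ f)
    (h : Summable fun n : ℕ => (n + 1) * f n) : Summable fun p : ℕ × ℕ => f (p.1 + p.2) :=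
  HasAntidiagonal.sigmaAntidiagonalEquivProd.summable_iff.1 <|
    (summable_sigma_of_nonneg fun _ => hf _).2
      ⟨fun _ => .of_finite, h.congr fun n => (tsum_antidiagonal_comp_add f n).symm⟩

open Finset in
theorem tsum_prod_comp_add {f : ℕ → ℝ} (h : Summable fun p : ℕ × ℕ => f (p.1 + p.2)) :
    ∑' p : ℕ × ℕ, f (p.1 + p.2) = ∑' n : ℕ, (n + 1) * f n := by
  rw [← HasAntidiagonal.sigmaAntidiagonalEquivProd.tsum_eq]
  exact ((HasAntidiagonal.sigmaAntidiagonalEquivProd.summable_iff.2 h).tsum_sigma'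
    fun _ => .of_finite).trans (tsum_congr (tsum_antidiagonal_comp_add f))

/-- The `m`-th term of the series `s ^ (a - 1) * E_{ν,a}(x s ^ ν)`. -/
noncomputable def mlTerm (ν a x : ℝ) (m : ℕ) (s : ℝ) : ℝ :=
  x ^ m * s ^ (ν * m + a - 1) / Gamma (ν * m + a)

theorem mlTerm_eq {ν a s : ℝ} (x : ℝ) (m : ℕ) (hs : 0 < s) :
    mlTerm ν a x m s = s ^ (a - 1) * ((x * s ^ ν) ^ m / Gamma (ν * m + a)) := by
  rw [mlTerm, mul_pow, ← rpow_mul_natCast hs.le, show ν * m + a - 1 = ν * m + (a - 1) by ring,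
    rpow_add hs]
  ring

theorem abs_mlTerm {ν a s : ℝ} (hν : 0 ≤ ν) (ha : 0 < a) (hs : 0 ≤ s) (x : ℝ) (m : ℕ) :
    |mlTerm ν a x m s| = mlTerm ν a |x| m s := by
  rw [mlTerm, mlTerm, abs_div, abs_mul, abs_pow, abs_of_nonneg (rpow_nonneg hs _),
    abs_of_pos (by positivity : 0 < Gamma (ν * m + a))]

theorem mlTerm_nonneg {ν a y s : ℝ} (hν : 0 ≤ ν) (ha : 0 < a) (hy : 0 ≤ y) (hs : 0 ≤ s)
    (m : ℕ) : 0 ≤ mlTerm ν a y m s := by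
  unfold mlTerm; positivity

theorem rpow_sub_one_mul_ml {ν a s : ℝ} (hs : 0 < s) (x : ℝ) :
    s ^ (a - 1) * ml ν a (x * s ^ ν) = ∑' m, mlTerm ν a x m s := by
  simp only [ml, mlTerm_eq x _ hs, tsum_mul_left]

theorem rpow_sub_one_mul_gml_two {ν c t : ℝ} (ht : 0 < t) (x : ℝ) :
    t ^ (c - 1) * gml ν c 2 (x * t ^ ν) = ∑' r : ℕ, (r + 1) * mlTerm ν c x r t := by
  rw [gml, ← tsum_mul_left]
  refine tsum_congr fun r => ?_
  have hpoch : ∏ i ∈ Finset.range r, ((2 : ℝ) + i) = (r + 1) * r.factorial := by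
    have := Nat.factorial_mul_ascFactorial 1 r
    rw [Nat.ascFactorial_eq_prod_range] at this
    exact_mod_cast by simpa [add_comm, Nat.factorial_succ] using this
  rw [hpoch, mlTerm_eq x r ht]
  field_simp

theorem summable_succ_mul_mlTerm {ν a y s : ℝ} (hν0 : 0 < ν) (hν1 : ν ≤ 1) (ha : 0 < a)
    (hy : 0 ≤ y) (hs : 0 < s) : Summable fun m : ℕ => (m + 1) * mlTerm ν a y m s := by
  refine ((summable_succ_mul_pow_div_Gamma (y := y * s ^ ν) hν0 hν1 ha (by positivity)).mul_left
    (s ^ (a - 1))).congr fun m => ?_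
  rw [mlTerm_eq y m hs]
  ring

theorem summable_mlTerm {ν a y s : ℝ} (hν0 : 0 < ν) (hν1 : ν ≤ 1) (ha : 0 < a)
    (hy : 0 ≤ y) (hs : 0 < s) : Summable fun m : ℕ => mlTerm ν a y m s :=
  ((summable_pow_div_Gamma (y := y * s ^ ν) hν0 hν1 ha (by positivity)).mul_left
    (s ^ (a - 1))).congr fun m => (mlTerm_eq y m hs).symm

theorem mlTerm_mul_mlTerm_sub (ν a b x t s : ℝ) (m n : ℕ) :
    mlTerm ν a x m s * mlTerm ν b x n (t - s) =
      x ^ (m + n) / (Gamma (ν * m + a) * Gamma (ν * n + b)) *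
        (s ^ (ν * m + a - 1) * (t - s) ^ (ν * n + b - 1)) := by
  simp only [mlTerm]; ring

theorem integrableOn_mlTerm_mul_mlTerm_sub {ν a b t : ℝ} (hν : 0 ≤ ν) (ha : 0 < a) (hb : 0 < b)
    (ht : 0 < t) (x : ℝ) (m n : ℕ) :
    IntegrableOn (fun s => mlTerm ν a x m s * mlTerm ν b x n (t - s)) (Set.Ioo 0 t) := by
  simp_rw [mlTerm_mul_mlTerm_sub]
  exact ((intervalIntegrable_rpow_mul_sub_rpow (by positivity) (by positivity) ht).1.mono_set
    Set.Ioo_subset_Ioc_self).const_mul _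

theorem integral_mlTerm_mul_mlTerm_sub {ν a b t : ℝ} (hν : 0 ≤ ν) (ha : 0 < a) (hb : 0 < b)
    (ht : 0 < t) (x : ℝ) (m n : ℕ) :
    ∫ s in Set.Ioo 0 t, mlTerm ν a x m s * mlTerm ν b x n (t - s) =
      mlTerm ν (a + b) x (m + n) t := by
  simp_rw [mlTerm_mul_mlTerm_sub]
  rw [integral_const_mul, ← integral_Ioc_eq_integral_Ioo, ← intervalIntegral.integral_of_le ht.le,
    integral_rpow_mul_sub_rpow (by positivity) (by positivity) ht, mlTerm,
    show ν * m + a + (ν * n + b) = ν * ↑(m + n) + (a + b) by push_cast; ring]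
  field_simp

theorem integral_norm_mlTerm_mul_mlTerm_sub {ν a b t : ℝ} (hν : 0 ≤ ν) (ha : 0 < a)
    (hb : 0 < b) (ht : 0 < t) (x : ℝ) (m n : ℕ) :
    ∫ s in Set.Ioo 0 t, ‖mlTerm ν a x m s * mlTerm ν b x n (t - s)‖ =
      mlTerm ν (a + b) |x| (m + n) t := by
  rw [← integral_mlTerm_mul_mlTerm_sub hν ha hb ht]
  refine setIntegral_congr_fun measurableSet_Ioo fun s hs => ?_
  rw [norm_mul, norm_eq_abs, norm_eq_abs, abs_mlTerm hν ha hs.1.le,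
    abs_mlTerm hν hb (sub_pos.2 hs.2).le]

theorem rpow_mul_ml_mul_rpow_mul_ml {ν a b s u : ℝ} (hν0 : 0 < ν) (hν1 : ν ≤ 1) (ha : 0 < a)
    (hb : 0 < b) (hs : 0 < s) (hu : 0 < u) (x : ℝ) :
    s ^ (a - 1) * ml ν a (x * s ^ ν) * (u ^ (b - 1) * ml ν b (x * u ^ ν)) =
      ∑' p : ℕ × ℕ, mlTerm ν a x p.1 s * mlTerm ν b x p.2 u := by
  rw [rpow_sub_one_mul_ml hs, rpow_sub_one_mul_ml hu, tsum_mul_tsum_of_summable_norm]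
    <;> simp only [norm_eq_abs, abs_mlTerm hν0.le ha hs.le, abs_mlTerm hν0.le hb hu.le]
  exacts [summable_mlTerm hν0 hν1 ha (abs_nonneg x) hs,
    summable_mlTerm hν0 hν1 hb (abs_nonneg x) hu]

theorem integral_rpow_mul_ml_mul_rpow_mul_ml {ν a b t : ℝ} (hν0 : 0 < ν) (hν1 : ν ≤ 1)
    (ha : 0 < a) (hb : 0 < b) (ht : 0 < t) (x : ℝ) :
    ∫ s in (0 : ℝ)..t,
        s ^ (a - 1) * ml ν a (x * s ^ ν) * ((t - s) ^ (b - 1) * ml ν b (x * (t - s) ^ ν)) =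
      t ^ (a + b - 1) * gml ν (a + b) 2 (x * t ^ ν) := by
  set G : ℕ × ℕ → ℝ → ℝ := fun p s => mlTerm ν a x p.1 s * mlTerm ν b x p.2 (t - s)
  have hint : ∀ p, Integrable (G p) (volume.restrict (Set.Ioo 0 t)) := fun p =>
    integrableOn_mlTerm_mul_mlTerm_sub hν0.le ha hb ht x p.1 p.2
  have hexpand : ∀ s ∈ Set.Ioo 0 t,
      s ^ (a - 1) * ml ν a (x * s ^ ν) * ((t - s) ^ (b - 1) * ml ν b (x * (t - s) ^ ν)) =
        ∑' p, G p s := fun s hs =>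
    rpow_mul_ml_mul_rpow_mul_ml hν0 hν1 ha hb hs.1 (sub_pos.2 hs.2) x
  have hsum : Summable fun p : ℕ × ℕ => mlTerm ν (a + b) |x| (p.1 + p.2) t :=
    summable_prod_comp_add (fun r => mlTerm_nonneg hν0.le (by positivity) (abs_nonneg x) ht.le r)
      (summable_succ_mul_mlTerm hν0 hν1 (by positivity) (abs_nonneg x) ht)
  have hsum_norm : Summable fun p => ∫ s in Set.Ioo 0 t, ‖G p s‖ := by
    simpa only [G, integral_norm_mlTerm_mul_mlTerm_sub hν0.le ha hb ht] using hsum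
  have hterm : ∀ p, ∫ s in Set.Ioo 0 t, G p s = mlTerm ν (a + b) x (p.1 + p.2) t := fun p =>
    integral_mlTerm_mul_mlTerm_sub hν0.le ha hb ht x p.1 p.2
  rw [intervalIntegral.integral_of_le ht.le, integral_Ioc_eq_integral_Ioo,
    setIntegral_congr_fun measurableSet_Ioo hexpand,
    ← integral_tsum_of_summable_integral_norm hint hsum_norm, tsum_congr hterm]
  refine (tsum_prod_comp_add (f := fun r => mlTerm ν (a + b) x r t) ?_).trans
    (rpow_sub_one_mul_gml_two ht x).symm
  exact hsum.of_norm_bounded fun p => (abs_mlTerm hν0.le (by positivity) ht.le x _).le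

theorem ml_density_self_convolution_general (ν lam t : ℝ) (hν : 0 < ν) (hν1 : ν ≤ 1) (ht : 0 < t) :
    ∫ s in (0 : ℝ)..t,
        (lam * s ^ (ν - 1) * ml ν ν (-(lam * s ^ ν))) *
          (lam * (t - s) ^ (ν - 1) * ml ν ν (-(lam * (t - s) ^ ν)))
      = lam ^ 2 * t ^ (2 * ν - 1) * gml ν (2 * ν) 2 (-(lam * t ^ ν)) := by
  have h := integral_rpow_mul_ml_mul_rpow_mul_ml hν hν1 hν hν ht (-lam)
  simp only [neg_mul, show ν + ν = 2 * ν by ring] at h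
  calc _ = ∫ s in (0 : ℝ)..t, lam ^ 2 * (s ^ (ν - 1) * ml ν ν (-(lam * s ^ ν)) *
          ((t - s) ^ (ν - 1) * ml ν ν (-(lam * (t - s) ^ ν)))) := by
        congr 1; ext s; ring
    _ = _ := by rw [intervalIntegral.integral_const_mul, h]; ring

/-- Convolution of the Mittag-Leffler interarrival density with itself:
`∫₀^t λ s^{ν-1}E_{ν,ν}(-λs^ν) · λ(t-s)^{ν-1}E_{ν,ν}(-λ(t-s)^ν) ds
  = λ² t^{2ν-1} E_{ν,2ν}^2(-λt^ν)`. -/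
theorem ml_density_self_convolution (ν lam t : ℝ) (hν : 0 < ν) (hν1 : ν ≤ 1)
    (hlam : 0 < lam) (ht : 0 < t) :
    ∫ s in (0 : ℝ)..t,
        (lam * s ^ (ν - 1) * ml ν ν (-(lam * s ^ ν))) *
          (lam * (t - s) ^ (ν - 1) * ml ν ν (-(lam * (t - s) ^ ν)))
      = lam ^ 2 * t ^ (2 * ν - 1) * gml ν (2 * ν) 2 (-(lam * t ^ ν)) :=
  ml_density_self_convolution_general ν lam t hν hν1 ht
end

section
/- For every ν ∈ (0,1], λ > 0 and t > 0, the derivative of the function t ↦ E_{ν,ν}(-λ t^{ν}) exists and satisfies d/dt E_{ν,ν}(-λ t^{ν}) = -(ν/(λ t^{ν})) · λ² t^{2ν-1} E_{ν, 2ν}^{2}(-λ t^{ν}); equivalently, λ² t^{2ν-1} E_{ν,2ν}^{2}(-λ t^{ν}) = -(λ t^{ν}/ν) · d/dt E_{ν,ν}(-λ t^{ν}). -/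
open Real

/-!
Differentiating term by term, `E_{ν,β}'(x) = Σ (r+1) x^r / Γ(νr + ν + β) = E_{ν,ν+β}^2(x)`, because
`(2)_r = (r+1)!`. Term-by-term differentiation is legitimate on every ball since
`Γ(x + ν) / Γ(x) → ∞` (by log-convexity of `Γ` for `ν < 1`, by monotonicity for `ν ≥ 1`), so the
ratio test makes `Σ (r+1) a^r / Γ(νr + β)` converge for every `a`. The theorem is then the chain
rule for `s ↦ E_{ν,ν}(-λ s^ν)` together with `(ν / (λ t^ν)) λ² t^{2ν-1} = λ ν t^{ν-1}`.
-/

open Filter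

theorem Real.Gamma_mul_rpow_le_Gamma_add {ν x : ℝ} (hν₀ : 0 < ν) (hν₁ : ν < 1)
    (hx : 1 - ν < x) : Gamma x * (x + ν - 1) ^ ν ≤ Gamma (x + ν) := by
  have hs : 0 < x + ν - 1 := by linarith
  have hrec : Gamma (x + ν) = (x + ν - 1) * Gamma (x + ν - 1) := by
    simpa using Gamma_add_one hs.ne'
  have hconv := Gamma_mul_add_mul_le_rpow_Gamma_mul_rpow_Gamma hs (by linarith : 0 < x + ν)
    hν₀ (sub_pos.2 hν₁) (add_sub_cancel ν 1)
  rw [show ν * (x + ν - 1) + (1 - ν) * (x + ν) = x by ring] at hconv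
  calc Gamma x * (x + ν - 1) ^ ν
      ≤ Gamma (x + ν - 1) ^ ν * Gamma (x + ν) ^ (1 - ν) * (x + ν - 1) ^ ν := by gcongr
    _ = Gamma (x + ν) := by
      rw [mul_right_comm, ← mul_rpow (Gamma_pos_of_pos hs).le hs.le, mul_comm _ (x + ν - 1),
        ← hrec, ← rpow_add (Gamma_pos_of_pos (by linarith)), add_sub_cancel, rpow_one]

theorem Real.tendsto_Gamma_add_div_Gamma_atTop {ν : ℝ} (hν : 0 < ν) :
    Tendsto (fun x => Gamma (x + ν) / Gamma x) atTop atTop := by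
  rcases lt_or_ge ν 1 with hν₁ | hν₁
  · refine tendsto_atTop_mono' _ ?_ ((tendsto_rpow_atTop hν).comp
      (tendsto_atTop_add_const_right _ (ν - 1) tendsto_id))
    filter_upwards [eventually_gt_atTop 1] with x hx
    rw [le_div_iff₀ (Gamma_pos_of_pos (by linarith)), mul_comm]
    simpa [add_sub_assoc] using Gamma_mul_rpow_le_Gamma_add hν hν₁ (by linarith)
  · refine tendsto_atTop_mono' _ ?_ tendsto_id
    filter_upwards [eventually_ge_atTop 1] with x hx
    rw [le_div_iff₀ (Gamma_pos_of_pos (by linarith)), id, ← Gamma_add_one (by linarith)]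
    exact Gamma_strictMonoOn_Ici.monotoneOn (by simp; linarith) (by simp; linarith)
      (by linarith)

theorem summable_mul_pow_div_Gamma {ν : ℝ} (hν : 0 < ν) (β a : ℝ) :
    Summable fun n : ℕ => (n + 1) * a ^ n / Gamma (ν * n + β) := by
  have harg : Tendsto (fun n : ℕ => ν * n + β) atTop atTop :=
    tendsto_atTop_add_const_right _ β (tendsto_natCast_atTop_atTop.const_mul_atTop hν)
  -- Once `Γ(x + ν) ≥ 4 (|a| + 1) Γ(x)`, consecutive terms shrink by at least `1/2`,
  -- as `(n + 2) |a| ≤ 2 (n + 1) (|a| + 1)`.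
  refine summable_of_ratio_norm_eventually_le (r := 1 / 2) (by norm_num) ?_
  filter_upwards [harg.eventually_gt_atTop 0,
    (tendsto_Gamma_add_div_Gamma_atTop hν).comp harg |>.eventually_ge_atTop (4 * (|a| + 1))]
    with n hpos hratio
  have hΓ := Gamma_pos_of_pos hpos
  rw [Function.comp_apply, le_div_iff₀ hΓ] at hratio
  have hΓ' : 0 < Gamma (ν * n + β + ν) := Gamma_pos_of_pos (by linarith)
  rw [show ν * ((n + 1 : ℕ) : ℝ) + β = ν * n + β + ν by push_cast; ring]
  simp only [norm_div, norm_mul, norm_pow, Real.norm_eq_abs, abs_of_pos hΓ, abs_of_pos hΓ',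
    Nat.cast_succ, abs_of_nonneg (by positivity : (0 : ℝ) ≤ n + 1),
    abs_of_nonneg (by positivity : (0 : ℝ) ≤ n + 1 + 1)]
  rw [div_le_iff₀ hΓ']
  set G := Gamma (ν * n + β)
  calc (n + 1 + 1) * |a| ^ (n + 1)
      ≤ 2 * (n + 1) * |a| ^ n * (|a| + 1) := by
        rw [pow_succ]
        nlinarith [mul_nonneg (pow_nonneg (abs_nonneg a) n)
          (by positivity : (0 : ℝ) ≤ n * |a| + 2 * n + 2)]
    _ = 1 / 2 * ((n + 1) * |a| ^ n / G) * (4 * (|a| + 1) * G) := by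
        field_simp; ring
    _ ≤ 1 / 2 * ((n + 1) * |a| ^ n / G) * Gamma (ν * n + β + ν) := by gcongr

theorem hasDerivAt_tsum_mul_pow {𝕜 : Type*} [RCLike 𝕜] {c : ℕ → 𝕜} {R : ℝ}
    (hc : Summable fun n : ℕ => (n + 1) * ‖c (n + 1)‖ * R ^ n) {x : 𝕜} (hx : ‖x‖ < R) :
    HasDerivAt (fun y => ∑' n, c n * y ^ n) (∑' n, (n + 1) * c (n + 1) * x ^ n) x := by
  have hR : 0 < R := (norm_nonneg x).trans_lt hx
  have hbound : ∀ n, ∀ y ∈ Metric.ball (0 : 𝕜) R,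
      ‖c n * (n * y ^ (n - 1))‖ ≤ ‖c n‖ * (n * R ^ (n - 1)) := by
    intro n y hy
    rw [mem_ball_zero_iff] at hy
    simp only [norm_mul, norm_pow, RCLike.norm_natCast]
    gcongr
  have hu : Summable fun n : ℕ => ‖c n‖ * (n * R ^ (n - 1)) :=
    (summable_nat_add_iff 1).1 <| hc.congr fun n => by push_cast; ring_nf
  have hsum₀ : Summable fun n => c n * (0 : 𝕜) ^ n :=
    summable_of_ne_finset_zero (s := {0}) fun n hn => by simp_all
  have hderiv := hasDerivAt_tsum_of_isPreconnected hu Metric.isOpen_ball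
    (convex_ball 0 R).isPreconnected (fun n y _ => (hasDerivAt_pow n y).const_mul (c n)) hbound
    (Metric.mem_ball_self hR) hsum₀ (mem_ball_zero_iff.2 hx)
  have hsum : Summable fun n : ℕ => c n * (n * x ^ (n - 1)) :=
    .of_norm_bounded hu fun n => hbound n x (mem_ball_zero_iff.2 hx)
  refine hderiv.congr_deriv ?_
  rw [hsum.tsum_eq_zero_add]
  simp only [Nat.cast_zero, zero_mul, mul_zero, zero_add, Nat.add_sub_cancel, Nat.cast_succ]
  exact tsum_congr fun n => by ring

theorem prod_range_two_add_eq_factorial (r : ℕ) :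
    ∏ i ∈ Finset.range r, ((2 : ℝ) + i) = (r + 1).factorial := by
  rw [← Finset.prod_range_add_one_eq_factorial, Finset.prod_range_succ']
  push_cast
  rw [mul_one]
  exact Finset.prod_congr rfl fun i _ => by ring

theorem gml_two (α β x : ℝ) :
    gml α β 2 x = ∑' r : ℕ, (r + 1) * x ^ r / Gamma (α * r + β) := by
  refine tsum_congr fun r => ?_
  rw [prod_range_two_add_eq_factorial, Nat.factorial_succ, Nat.cast_mul, mul_assoc,
    mul_left_comm, mul_div_mul_left _ _ (by positivity), Nat.cast_succ]

theorem hasDerivAt_ml {ν : ℝ} (hν : 0 < ν) (β x : ℝ) :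
    HasDerivAt (ml ν β) (gml ν (ν + β) 2 x) x := by
  have hml : ml ν β = fun y => ∑' n : ℕ, (Gamma (ν * n + β))⁻¹ * y ^ n :=
    funext fun y => tsum_congr fun n => div_eq_inv_mul _ _
  have hc : Summable fun n : ℕ => (n + 1) * ‖(Gamma (ν * (n + 1 : ℕ) + β))⁻¹‖ * (|x| + 1) ^ n :=
    (summable_mul_pow_div_Gamma hν (ν + β) (|x| + 1)).norm.congr fun n => by
      rw [Nat.cast_succ, mul_add_one, add_assoc, norm_div, norm_mul, norm_pow, norm_inv,
        Real.norm_of_nonneg (by positivity : (0 : ℝ) ≤ n + 1),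
        Real.norm_of_nonneg (by positivity : (0 : ℝ) ≤ |x| + 1), div_eq_mul_inv, mul_right_comm]
  rw [hml, gml_two]
  have hx : ‖x‖ < |x| + 1 := by rw [Real.norm_eq_abs]; linarith
  refine (hasDerivAt_tsum_mul_pow (c := fun n : ℕ => (Gamma (ν * n + β))⁻¹) hc hx).congr_deriv
    (tsum_congr fun n => ?_)
  rw [Nat.cast_succ, mul_add_one, add_assoc, div_eq_mul_inv, mul_right_comm]

theorem deriv_ml_eq_gml_general (ν lam t : ℝ) (hν : 0 < ν)
    (hlam : 0 < lam) (ht : 0 < t) :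
    HasDerivAt (fun s : ℝ => ml ν ν (-(lam * s ^ ν)))
        (-(ν / (lam * t ^ ν)) *
          (lam ^ 2 * t ^ (2 * ν - 1) * gml ν (2 * ν) 2 (-(lam * t ^ ν)))) t
      ∧ lam ^ 2 * t ^ (2 * ν - 1) * gml ν (2 * ν) 2 (-(lam * t ^ ν))
          = -(lam * t ^ ν / ν) *
              deriv (fun s : ℝ => ml ν ν (-(lam * s ^ ν))) t := by
  have hderiv : HasDerivAt (fun s : ℝ => ml ν ν (-(lam * s ^ ν)))
      (gml ν (2 * ν) 2 (-(lam * t ^ ν)) * -(lam * (ν * t ^ (ν - 1)))) t := by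
    rw [two_mul]
    exact (hasDerivAt_ml hν ν _).comp t
      ((hasDerivAt_rpow_const (Or.inl ht.ne')).const_mul lam).neg
  have hcoef : -(ν / (lam * t ^ ν)) * (lam ^ 2 * t ^ (2 * ν - 1)) =
      -(lam * (ν * t ^ (ν - 1))) := by
    rw [show 2 * ν - 1 = ν + (ν - 1) by ring, rpow_add ht]
    field_simp
  refine ⟨?_, ?_⟩
  · rw [← mul_assoc, hcoef, mul_comm]
    exact hderiv
  · rw [hderiv.deriv, ← hcoef]
    field_simp

/-- For `ν ∈ (0,1]`, `λ > 0`, `t > 0`, the function `t ↦ E_{ν,ν}(-λt^ν)` is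
differentiable with
`d/dt E_{ν,ν}(-λt^ν) = -(ν/(λt^ν)) λ² t^{2ν-1} E_{ν,2ν}^2(-λt^ν)`; equivalently
`λ² t^{2ν-1} E_{ν,2ν}^2(-λt^ν) = -(λt^ν/ν) d/dt E_{ν,ν}(-λt^ν)`. -/
theorem deriv_ml_eq_gml (ν lam t : ℝ) (hν : 0 < ν) (hν1 : ν ≤ 1)
    (hlam : 0 < lam) (ht : 0 < t) :
    HasDerivAt (fun s : ℝ => ml ν ν (-(lam * s ^ ν)))
        (-(ν / (lam * t ^ ν)) *
          (lam ^ 2 * t ^ (2 * ν - 1) * gml ν (2 * ν) 2 (-(lam * t ^ ν)))) t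
      ∧ lam ^ 2 * t ^ (2 * ν - 1) * gml ν (2 * ν) 2 (-(lam * t ^ ν))
          = -(lam * t ^ ν / ν) *
              deriv (fun s : ℝ => ml ν ν (-(lam * s ^ ν))) t :=
  deriv_ml_eq_gml_general ν lam t hν hlam ht
end
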